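/- Let A be an operator form of L0 with lev(νX.A) ≤ k, let h = lev(νX.A), let Δ, Σ₁, Σ₂ be h-positive sequents, and let B be a formula of L0 with lev(B) ≤ k. Assume both sequents (¬A(B))', B and (¬A(B))', B' are derivable in M^Ω_k. Then: if Δ, Σ₁, Σ₂ has a cut-free derivation in M^Ω_{k-1}, then the sequent Δ, Σ₁[(μX.A)' := B], Σ₂[(μX.A)' := B'] is derivable in M^Ω_k, where Σ[(μX.A)' := C] denotes the result of simultaneously replacing in every formula of Σ every occurrence of (μX.A)' by C. -/

import Mathlib

namespace OneVarMu

/-- Operator forms of the language `L_Ω` (one fixed variable `X`, written `var`).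
`nut` is the auxiliary fixed-point connective `ν̃`; `L0` operator forms are the
`nut`-free ones. -/
inductive Form : Type
  | atom  : ℕ → Form          -- p_i
  | natom : ℕ → Form          -- p̄_i
  | var   : Form              -- X
  | and   : Form → Form → Form
  | or    : Form → Form → Form
  | box   : Form → Form
  | dia   : Form → Form
  | mu    : Form → Form       -- μX.A
  | nu    : Form → Form       -- νX.A
  | nut   : Form → Form       -- ν̃X.A
  deriving DecidableEq

namespace Form

/-- Negation `¬A` (on `ν̃` we extend the `L0` definition as for `ν`). -/
def compl : Form → Form
  | atom i  => natom i
  | natom i => atom i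
  | var     => var
  | and A B => or (compl A) (compl B)
  | or A B  => and (compl A) (compl B)
  | box A   => dia (compl A)
  | dia A   => box (compl A)
  | mu A    => nu (compl A)
  | nu A    => mu (compl A)
  | nut A   => mu (compl A)

/-- `subst A B` is `A(B)`: substitute `B` for every free occurrence of `X` in `A`. -/
def subst : Form → Form → Form
  | atom i, _  => atom i
  | natom i, _ => natom i
  | var, B     => B
  | and A1 A2, B => and (subst A1 B) (subst A2 B)
  | or A1 A2, B  => or (subst A1 B) (subst A2 B)
  | box A, B   => box (subst A B)
  | dia A, B   => dia (subst A B)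
  | mu A, _    => mu A
  | nu A, _    => nu A
  | nut A, _   => nut A

/-- The level of an operator form: maximal nesting of fixed-point operators. -/
def lev : Form → ℕ
  | atom _  => 0
  | natom _ => 0
  | var     => 0
  | and A B => max (lev A) (lev B)
  | or A B  => max (lev A) (lev B)
  | box A   => lev A
  | dia A   => lev A
  | mu A    => lev A + 1
  | nu A    => lev A + 1
  | nut A   => lev A + 1

/-- `A'`: replace every occurrence of `νX` by `ν̃X`. -/
def prime : Form → Form
  | atom i  => atom i
  | natom i => natom i
  | var     => var
  | and A B => and (prime A) (prime B)
  | or A B  => or (prime A) (prime B)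
  | box A   => box (prime A)
  | dia A   => dia (prime A)
  | mu A    => mu (prime A)
  | nu A    => nut (prime A)
  | nut A   => nut (prime A)

/-- `A` is an operator form of `L0`, i.e. contains no `ν̃`. -/
def IsL0 : Form → Prop
  | and A B => IsL0 A ∧ IsL0 B
  | or A B  => IsL0 A ∧ IsL0 B
  | box A   => IsL0 A
  | dia A   => IsL0 A
  | mu A    => IsL0 A
  | nu A    => IsL0 A
  | nut _   => False
  | _       => True

/-- `A` has no free occurrence of the variable `X`, i.e. `A` is a formula. -/
def ClosedF : Form → Prop
  | var     => False
  | and A B => ClosedF A ∧ ClosedF B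
  | or A B  => ClosedF A ∧ ClosedF B
  | box A   => ClosedF A
  | dia A   => ClosedF A
  | _       => True

/-- `⊤ := p ∨ p̄` for a fixed atomic proposition. -/
def top : Form := or (atom 0) (natom 0)

/-- Finite iterations `A^i(⊤)`. -/
def iter (A : Form) : ℕ → Form
  | 0     => top
  | n + 1 => subst A (iter A n)

/-- `OccursIn A B`: the operator form `A` occurs (as a subterm) in `B`. -/
def OccursIn (A : Form) : Form → Prop
  | atom i  => A = atom i
  | natom i => A = natom i
  | var     => A = var
  | and C D => A = and C D ∨ OccursIn A C ∨ OccursIn A D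
  | or C D  => A = or C D ∨ OccursIn A C ∨ OccursIn A D
  | box C   => A = box C ∨ OccursIn A C
  | dia C   => A = dia C ∨ OccursIn A C
  | mu C    => A = mu C ∨ OccursIn A C
  | nu C    => A = nu C ∨ OccursIn A C
  | nut C   => A = nut C ∨ OccursIn A C

/-- `replace t r A`: simultaneously replace every occurrence of `t` in `A` by `r`. -/
def replace (t r : Form) : Form → Form
  | and A B => if and A B = t then r else and (replace t r A) (replace t r B)
  | or A B  => if or A B = t then r else or (replace t r A) (replace t r B)
  | box A   => if box A = t then r else box (replace t r A)
  | dia A   => if dia A = t then r else dia (replace t r A)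
  | mu A    => if mu A = t then r else mu (replace t r A)
  | nu A    => if nu A = t then r else nu (replace t r A)
  | nut A   => if nut A = t then r else nut (replace t r A)
  | A       => if A = t then r else A

end Form

/-- Sequents are finite sets of formulae. -/
abbrev Sequent := Finset Form

/-- Every member is a formula (no free `X`): a sequent of `L_Ω`. -/
def ClosedSeq (Γ : Sequent) : Prop := ∀ C ∈ Γ, C.ClosedF

/-- A sequent of `L0`: every member is a `ν̃`-free formula. -/
def L0Seq (Γ : Sequent) : Prop := ∀ C ∈ Γ, C.IsL0 ∧ C.ClosedF

/-- `Γ` is `h`-positive: every `ν̃X.A` occurring in it has level `< h`. -/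
def Positive (h : ℕ) (Γ : Sequent) : Prop :=
  ∀ C ∈ Γ, ∀ B : Form, Form.OccursIn (Form.nut B) C → Form.lev (Form.nut B) < h

/-- Every formula of the sequent has level `≤ k`. -/
def SeqLevLE (k : ℕ) (Γ : Sequent) : Prop := ∀ C ∈ Γ, C.lev ≤ k

/-- The infinitary cut-free system `K_ω`. -/
inductive KDer : Sequent → Prop
  | ax (Γ : Sequent) (i : ℕ) :
      KDer (insert (Form.atom i) (insert (Form.natom i) Γ))
  | orR (Γ : Sequent) (A B : Form) :
      KDer (insert A (insert B Γ)) → KDer (insert (Form.or A B) Γ)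
  | andR (Γ : Sequent) (A B : Form) :
      KDer (insert A Γ) → KDer (insert B Γ) → KDer (insert (Form.and A B) Γ)
  | boxR (Γ S : Sequent) (A : Form) :
      KDer (insert A Γ) → KDer (Γ.image Form.dia ∪ insert (Form.box A) S)
  | clo (Γ : Sequent) (A : Form) :
      KDer (insert (Form.subst A (Form.mu A)) Γ) → KDer (insert (Form.mu A) Γ)
  | nuR (Γ : Sequent) (A : Form) :
      (∀ i : ℕ, KDer (insert (Form.iter A i) Γ)) → KDer (insert (Form.nu A) Γ)

/-- The finitary system `M` (with induction rule and cut). -/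
inductive MDer : Sequent → Prop
  | ax (Γ : Sequent) (i : ℕ) :
      MDer (insert (Form.atom i) (insert (Form.natom i) Γ))
  | axMu (Γ : Sequent) (A : Form) :
      MDer (insert (Form.mu A) (insert (Form.compl (Form.mu A)) Γ))
  | orR (Γ : Sequent) (A B : Form) :
      MDer (insert A (insert B Γ)) → MDer (insert (Form.or A B) Γ)
  | andR (Γ : Sequent) (A B : Form) :
      MDer (insert A Γ) → MDer (insert B Γ) → MDer (insert (Form.and A B) Γ)
  | boxR (Γ S : Sequent) (A : Form) :
      MDer (insert A Γ) → MDer (Γ.image Form.dia ∪ insert (Form.box A) S)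
  | clo (Γ : Sequent) (A : Form) :
      MDer (insert (Form.subst A (Form.mu A)) Γ) → MDer (insert (Form.mu A) Γ)
  | ind (A B : Form) :
      MDer (insert (Form.compl (Form.subst A B)) {B}) →
      MDer (insert (Form.compl (Form.mu A)) {B})
  | cut (Γ : Sequent) (A : Form) :
      A.IsL0 → A.ClosedF →
      MDer (insert A Γ) → MDer (insert (Form.compl A) Γ) → MDer Γ

/-- The finitary system `M`, with the extra recording that every sequent occurring
in the proof (i.e. the conclusion of every subderivation) has level `≤ k`. -/
inductive MDerB (k : ℕ) : Sequent → Prop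
  | ax (Γ : Sequent) (i : ℕ) :
      SeqLevLE k (insert (Form.atom i) (insert (Form.natom i) Γ)) →
      MDerB k (insert (Form.atom i) (insert (Form.natom i) Γ))
  | axMu (Γ : Sequent) (A : Form) :
      SeqLevLE k (insert (Form.mu A) (insert (Form.compl (Form.mu A)) Γ)) →
      MDerB k (insert (Form.mu A) (insert (Form.compl (Form.mu A)) Γ))
  | orR (Γ : Sequent) (A B : Form) :
      SeqLevLE k (insert (Form.or A B) Γ) →
      MDerB k (insert A (insert B Γ)) → MDerB k (insert (Form.or A B) Γ)
  | andR (Γ : Sequent) (A B : Form) :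
      SeqLevLE k (insert (Form.and A B) Γ) →
      MDerB k (insert A Γ) → MDerB k (insert B Γ) → MDerB k (insert (Form.and A B) Γ)
  | boxR (Γ S : Sequent) (A : Form) :
      SeqLevLE k (Γ.image Form.dia ∪ insert (Form.box A) S) →
      MDerB k (insert A Γ) → MDerB k (Γ.image Form.dia ∪ insert (Form.box A) S)
  | clo (Γ : Sequent) (A : Form) :
      SeqLevLE k (insert (Form.mu A) Γ) →
      MDerB k (insert (Form.subst A (Form.mu A)) Γ) → MDerB k (insert (Form.mu A) Γ)
  | ind (A B : Form) :
      SeqLevLE k (insert (Form.compl (Form.mu A)) {B}) →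
      MDerB k (insert (Form.compl (Form.subst A B)) {B}) →
      MDerB k (insert (Form.compl (Form.mu A)) {B})
  | cut (Γ : Sequent) (A : Form) :
      A.IsL0 → A.ClosedF → SeqLevLE k Γ →
      MDerB k (insert A Γ) → MDerB k (insert (Form.compl A) Γ) → MDerB k Γ

/-- Derivations of the system `M^Ω_k`, relative to a predicate `prev` expressing
cut-free derivability in `M^Ω_{k-1}`.  The boolean index is `true` if instances
of cut are allowed and `false` for cut-free derivations. -/
inductive OmDerAux (prev : Sequent → Prop) (k : ℕ) : Bool → Sequent → Prop
  | ax (c : Bool) (Γ : Sequent) (i : ℕ) :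
      OmDerAux prev k c (insert (Form.atom i) (insert (Form.natom i) Γ))
  | orR (c : Bool) (Γ : Sequent) (A B : Form) :
      OmDerAux prev k c (insert A (insert B Γ)) →
      OmDerAux prev k c (insert (Form.or A B) Γ)
  | andR (c : Bool) (Γ : Sequent) (A B : Form) :
      OmDerAux prev k c (insert A Γ) → OmDerAux prev k c (insert B Γ) →
      OmDerAux prev k c (insert (Form.and A B) Γ)
  | boxR (c : Bool) (Γ S : Sequent) (A : Form) :
      OmDerAux prev k c (insert A Γ) →
      OmDerAux prev k c (Γ.image Form.dia ∪ insert (Form.box A) S)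
  | clo (c : Bool) (Γ : Sequent) (A : Form) :
      OmDerAux prev k c (insert (Form.subst A (Form.mu A)) Γ) →
      OmDerAux prev k c (insert (Form.mu A) Γ)
  | nuR (c : Bool) (Γ : Sequent) (A : Form) :
      (∀ i : ℕ, OmDerAux prev k c (insert (Form.iter A i) Γ)) →
      OmDerAux prev k c (insert (Form.nu A) Γ)
  | cut (Γ : Sequent) (A : Form) :
      A.IsL0 → A.ClosedF → A.lev ≤ k →
      OmDerAux prev k true (insert (Form.prime A) Γ) →
      OmDerAux prev k true (insert (Form.prime (Form.compl A)) Γ) →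
      OmDerAux prev k true Γ
  | omega (c : Bool) (Γ : Sequent) (A : Form) (h : ℕ) :
      1 ≤ h → h ≤ k → A.IsL0 →
      Form.lev (Form.prime (Form.compl (Form.mu A))) = h →
      (∀ Δ : Sequent, ClosedSeq Δ → Positive h Δ →
        prev (insert (Form.prime (Form.mu A)) Δ) → OmDerAux prev k c (Δ ∪ Γ)) →
      OmDerAux prev k c (insert (Form.prime (Form.compl (Form.mu A))) Γ)
  | omegaT (c : Bool) (Γ : Sequent) (A : Form) (h : ℕ) :
      1 ≤ h → h ≤ k → A.IsL0 →
      Form.lev (Form.prime (Form.compl (Form.mu A))) = h →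
      OmDerAux prev k c (insert (Form.prime (Form.mu A)) Γ) →
      (∀ Δ : Sequent, ClosedSeq Δ → Positive h Δ →
        prev (insert (Form.prime (Form.mu A)) Δ) → OmDerAux prev k c (Δ ∪ Γ)) →
      OmDerAux prev k c Γ

/-- `OmProv k c Γ`: the sequent `Γ` is derivable in `M^Ω_k`
(cut-free when `c = false`). -/
def OmProv : ℕ → Bool → Sequent → Prop
  | 0     => OmDerAux (fun _ => False) 0
  | k + 1 => OmDerAux (fun Δ => OmProv k false Δ) (k + 1)

/-!
Induct on the cut-free `M^Ω_{k-1}` derivation of `Δ, S₁, S₂`, showing that every sequent containing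
a `Replaced` image of each formula of a derived sequent is derivable in `M^Ω_k`: a formula is either
kept, or it is `h`-positive and has `(μX.A)'` replaced by `B` or `B'`. Every inference is replayed
in `M^Ω_k` on the replaced formulas. Where the closure rule unfolds the replaced `(μX.A)'` itself,
its premise becomes `(A(B))'`, which is cut against the given derivations of `(¬A(B))', B` and
`(¬A(B))', B'`. Positivity keeps `(μX.A)'` out of the principal formulas of Ω-rules, whose level is
below `h`.

The Ω-rules of the given derivation refer to cut-free `M^Ω_{k-2}` derivations, those of the new one
to cut-free `M^Ω_{k-1}` derivations. They are reconciled by collapsing: a cut-free `M^Ω_{m+1}`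
derivation of an `(m+1)`-positive sequent is turned into one in `M^Ω_m`, eliminating each
`Ω̃_{m+1}` inference by feeding its own (collapsed) premise into its proviso. Collapsing and the
inclusion `M^Ω_m ⊆ M^Ω_{m+1}` are proved together by induction on `m`.
-/

namespace Form

theorem occursIn_self (C : Form) : OccursIn C C := by
  cases C <;> simp [OccursIn]

@[simp] theorem lev_prime (C : Form) : C.prime.lev = C.lev := by
  induction C <;> simp [prime, lev, *]

@[simp] theorem lev_compl (C : Form) : C.compl.lev = C.lev := by
  induction C <;> simp [compl, lev, *]

@[simp] theorem lev_prime_compl_mu (E : Form) : (compl (mu E)).prime.lev = E.lev + 1 := by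
  simp [compl, prime, lev]

theorem lev_le_of_occursIn {C D : Form} (h : OccursIn D C) : D.lev ≤ C.lev := by
  induction C generalizing D <;> simp only [OccursIn] at h <;> grind [lev]

theorem not_occursIn_mu_self (C : Form) : ¬ OccursIn (mu C) C := fun h => by
  simpa [lev] using lev_le_of_occursIn h

theorem replace_of_not_occursIn {t r C : Form} (h : ¬ OccursIn t C) : replace t r C = C := by
  induction C <;> simp only [OccursIn, not_or] at h <;> grind [replace]

theorem prime_subst (C R : Form) : (subst C R).prime = subst C.prime R.prime := by
  induction C <;> simp [prime, subst, *]

theorem ClosedF.prime {C : Form} (h : C.ClosedF) : C.prime.ClosedF := by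
  induction C <;> simp_all [Form.prime, ClosedF]

theorem ClosedF.of_eq_or_eq_prime {u B : Form} (hB : B.ClosedF) (hu : u = B ∨ u = B.prime) :
    u.ClosedF := by
  rcases hu with rfl | rfl
  exacts [hB, hB.prime]

theorem closedF_subst (C : Form) {R : Form} (hR : R.ClosedF) : (subst C R).ClosedF := by
  induction C <;> simp [subst, ClosedF, *]

theorem subst_of_closedF {C : Form} (R : Form) (h : C.ClosedF) : subst C R = C := by
  induction C <;> simp_all [subst, ClosedF]

theorem IsL0.subst {C R : Form} (hC : C.IsL0) (hR : R.IsL0) : (subst C R).IsL0 := by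
  induction C <;> simp_all [Form.subst, IsL0]

theorem lev_subst_le (C R : Form) : (subst C R).lev ≤ max C.lev R.lev := by
  induction C <;> simp [subst, lev, *] <;> omega

theorem closedF_iter (C : Form) : ∀ i, (iter C i).ClosedF
  | 0 => ⟨trivial, trivial⟩
  | i + 1 => closedF_subst C (closedF_iter C i)

theorem replace_subst {r : Form} (T : Form) (hr : r.ClosedF) (C R : Form) :
    replace (mu T) r (subst C R) = subst (replace (mu T) r C) (replace (mu T) r R) := by
  induction C <;> simp only [replace, subst, reduceCtorEq, if_false, *]
  case mu C _ => split_ifs <;> simp [subst, subst_of_closedF _ hr]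

theorem replace_iter {r : Form} (T : Form) (hr : r.ClosedF) (C : Form) (i : ℕ) :
    replace (mu T) r (iter C i) = iter (replace (mu T) r C) i := by
  induction i with
  | zero => simp [iter, top, replace]
  | succ i ih => simp [iter, replace_subst T hr, ih]

theorem occursIn_nut_subst {C R D : Form} (h : OccursIn (nut D) (subst C R)) :
    OccursIn (nut D) C ∨ OccursIn (nut D) R := by
  induction C <;> simp_all [subst, OccursIn] <;> tauto

theorem occursIn_nut_iter {C D : Form} {i : ℕ} (h : OccursIn (nut D) (iter C i)) :
    OccursIn (nut D) C := by
  induction i with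
  | zero => simp [iter, top, OccursIn] at h
  | succ i ih => exact (occursIn_nut_subst h).elim id ih

-- `Positive h Γ` unfolds to `∀ C ∈ Γ, C.IsPositive h`.
def IsPositive (h : ℕ) (C : Form) : Prop := ∀ D, OccursIn (nut D) C → (nut D).lev < h

variable {h : ℕ} {C D : Form}

theorem IsPositive.or_left (hp : (or C D).IsPositive h) : C.IsPositive h :=
  fun E hE => hp E (Or.inr (Or.inl hE))

theorem IsPositive.or_right (hp : (or C D).IsPositive h) : D.IsPositive h :=
  fun E hE => hp E (Or.inr (Or.inr hE))

theorem IsPositive.and_left (hp : (and C D).IsPositive h) : C.IsPositive h :=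
  fun E hE => hp E (Or.inr (Or.inl hE))

theorem IsPositive.and_right (hp : (and C D).IsPositive h) : D.IsPositive h :=
  fun E hE => hp E (Or.inr (Or.inr hE))

theorem IsPositive.of_box (hp : (box C).IsPositive h) : C.IsPositive h :=
  fun E hE => hp E (Or.inr hE)

theorem IsPositive.of_dia (hp : (dia C).IsPositive h) : C.IsPositive h :=
  fun E hE => hp E (Or.inr hE)

theorem IsPositive.subst_mu (hp : (mu C).IsPositive h) : (subst C (mu C)).IsPositive h :=
  fun E hE => (occursIn_nut_subst hE).elim (fun hC => hp E (Or.inr hC)) (hp E)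

theorem IsPositive.iter (hp : (nu C).IsPositive h) (i : ℕ) : (iter C i).IsPositive h :=
  fun E hE => hp E (Or.inr (occursIn_nut_iter hE))

theorem IsPositive.mono {h' : ℕ} (hp : C.IsPositive h) (hh : h ≤ h') : C.IsPositive h' :=
  fun E hE => (hp E hE).trans_le hh

theorem IsPositive.lev_lt_of_compl_mu (hp : (compl (mu C)).prime.IsPositive h) :
    C.lev + 1 < h := by
  simpa [lev] using hp _ (occursIn_self _)

theorem isPositive_mu_prime (E : Form) : (mu E.prime).IsPositive (E.lev + 1) := by
  rintro D (hD | hD)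
  · cases hD
  · simpa using lev_le_of_occursIn hD

end Form

open Form

theorem positive_insert {h : ℕ} {C : Form} {Γ : Sequent} :
    Positive h (insert C Γ) ↔ C.IsPositive h ∧ Positive h Γ :=
  Finset.forall_mem_insert _ _ _

theorem closedSeq_insert {C : Form} {Γ : Sequent} :
    ClosedSeq (insert C Γ) ↔ C.ClosedF ∧ ClosedSeq Γ :=
  Finset.forall_mem_insert _ _ _

theorem Positive.mono {h h' : ℕ} {Γ : Sequent} (hp : Positive h Γ) (hh : h ≤ h') :
    Positive h' Γ := fun C hC D hD => (hp C hC D hD).trans_le hh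

theorem Positive.union {h : ℕ} {Γ Δ : Sequent} (hΓ : Positive h Γ) (hΔ : Positive h Δ) :
    Positive h (Γ ∪ Δ) :=
  Finset.forall_mem_union.2 ⟨hΓ, hΔ⟩

theorem ClosedSeq.union {Γ Δ : Sequent} (hΓ : ClosedSeq Γ) (hΔ : ClosedSeq Δ) :
    ClosedSeq (Γ ∪ Δ) :=
  Finset.forall_mem_union.2 ⟨hΓ, hΔ⟩

-- `p` implies `q` on every sequent that an Ω-rule of level `≤ k` asks about.
def TransfersOmegaPremises (k : ℕ) (p q : Sequent → Prop) : Prop :=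
  ∀ (E : Form) (h : ℕ) (Δ : Sequent), h ≤ k → (compl (mu E)).prime.lev = h →
    ClosedSeq Δ → Positive h Δ → p (insert (mu E).prime Δ) → q (insert (mu E).prime Δ)

namespace OmDerAux

variable {prev : Sequent → Prop} {k : ℕ} {c : Bool} {Γ Γ' : Sequent} {A B : Form}

theorem ax_of_mem {i : ℕ} (ha : atom i ∈ Γ) (hn : natom i ∈ Γ) : OmDerAux prev k c Γ := by
  simpa only [Finset.insert_eq_of_mem, ha, hn] using ax (prev := prev) (k := k) c Γ i

theorem orR_of_mem (hm : or A B ∈ Γ) (h : OmDerAux prev k c (insert A (insert B Γ))) :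
    OmDerAux prev k c Γ := by
  simpa only [Finset.insert_eq_of_mem hm] using orR c Γ A B h

theorem andR_of_mem (hm : and A B ∈ Γ) (hA : OmDerAux prev k c (insert A Γ))
    (hB : OmDerAux prev k c (insert B Γ)) : OmDerAux prev k c Γ := by
  simpa only [Finset.insert_eq_of_mem hm] using andR c Γ A B hA hB

theorem boxR_of_mem {S : Sequent} (hm : box A ∈ Γ) (hS : S.image dia ⊆ Γ)
    (h : OmDerAux prev k c (insert A S)) : OmDerAux prev k c Γ := by
  simpa only [Finset.insert_eq_of_mem hm, Finset.union_eq_right.2 hS] using boxR c S Γ A h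

theorem clo_of_mem (hm : mu A ∈ Γ) (h : OmDerAux prev k c (insert (subst A (mu A)) Γ)) :
    OmDerAux prev k c Γ := by
  simpa only [Finset.insert_eq_of_mem hm] using clo c Γ A h

theorem nuR_of_mem (hm : nu A ∈ Γ) (h : ∀ i, OmDerAux prev k c (insert (iter A i) Γ)) :
    OmDerAux prev k c Γ := by
  simpa only [Finset.insert_eq_of_mem hm] using nuR c Γ A h

theorem omega_of_mem {h : ℕ} (h1 : 1 ≤ h) (hk : h ≤ k) (hA : A.IsL0)
    (hlev : (compl (mu A)).prime.lev = h) (hm : (compl (mu A)).prime ∈ Γ)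
    (hΔ : ∀ Δ : Sequent, ClosedSeq Δ → Positive h Δ →
      prev (insert (mu A).prime Δ) → OmDerAux prev k c (Δ ∪ Γ)) :
    OmDerAux prev k c Γ := by
  simpa only [Finset.insert_eq_of_mem hm] using omega c Γ A h h1 hk hA hlev hΔ

theorem mono (hd : OmDerAux prev k c Γ) (hs : Γ ⊆ Γ') : OmDerAux prev k c Γ' := by
  induction hd generalizing Γ' with
  | ax c Γ i =>
    exact ax_of_mem (hs (Finset.mem_insert_self _ _))
      (hs (Finset.mem_insert_of_mem (Finset.mem_insert_self _ _)))
  | orR c Γ A B _ ih =>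
    refine orR_of_mem (hs (Finset.mem_insert_self _ _)) (ih ?_)
    gcongr
    exact (Finset.subset_insert _ _).trans hs
  | andR c Γ A B _ _ ihA ihB =>
    have hΓ := (Finset.subset_insert _ _).trans hs
    exact andR_of_mem (hs (Finset.mem_insert_self _ _)) (ihA (by gcongr)) (ihB (by gcongr))
  | boxR c Γ S A hd _ =>
    exact boxR_of_mem (hs (by simp)) (Finset.union_subset_left hs) hd
  | clo c Γ A _ ih =>
    have hΓ := (Finset.subset_insert _ _).trans hs
    exact clo_of_mem (hs (Finset.mem_insert_self _ _)) (ih (by gcongr))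
  | nuR c Γ A _ ih =>
    have hΓ := (Finset.subset_insert _ _).trans hs
    exact nuR_of_mem (hs (Finset.mem_insert_self _ _)) fun i => ih i (by gcongr)
  | cut Γ A hA hAc hAk _ _ ih₁ ih₂ =>
    exact cut Γ' A hA hAc hAk (ih₁ (by gcongr)) (ih₂ (by gcongr))
  | omega c Γ A h h1 hk hA hlev _ ih =>
    have hΓ := (Finset.subset_insert _ _).trans hs
    exact omega_of_mem h1 hk hA hlev (hs (Finset.mem_insert_self _ _))
      fun Δ hΔc hΔp hΔ => ih Δ hΔc hΔp hΔ (by gcongr)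
  | omegaT c Γ A h h1 hk hA hlev _ _ ihT ih =>
    exact omegaT c Γ' A h h1 hk hA hlev (ihT (by gcongr))
      fun Δ hΔc hΔp hΔ => ih Δ hΔc hΔp hΔ (by gcongr)

theorem lift {prev' : Sequent → Prop} {k' : ℕ} (hk : k ≤ k')
    (htr : TransfersOmegaPremises k prev' prev) (hd : OmDerAux prev k c Γ) :
    OmDerAux prev' k' c Γ := by
  induction hd with
  | ax c Γ i => exact ax c Γ i
  | orR c Γ A B _ ih => exact orR c Γ A B ih
  | andR c Γ A B _ _ ihA ihB => exact andR c Γ A B ihA ihB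
  | boxR c Γ S A _ ih => exact boxR c Γ S A ih
  | clo c Γ A _ ih => exact clo c Γ A ih
  | nuR c Γ A _ ih => exact nuR c Γ A ih
  | cut Γ A hA hAc hAk _ _ ih₁ ih₂ => exact cut Γ A hA hAc (hAk.trans hk) ih₁ ih₂
  | omega c Γ A h h1 hhk hA hlev _ ih =>
    exact omega c Γ A h h1 (hhk.trans hk) hA hlev fun Δ hΔc hΔp hΔ =>
      ih Δ hΔc hΔp (htr A h Δ hhk hlev hΔc hΔp hΔ)
  | omegaT c Γ A h h1 hhk hA hlev _ _ ihT ih =>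
    exact omegaT c Γ A h h1 (hhk.trans hk) hA hlev ihT fun Δ hΔc hΔp hΔ =>
      ih Δ hΔc hΔp (htr A h Δ hhk hlev hΔc hΔp hΔ)

theorem collapse {prev' : Sequent → Prop} {m : ℕ} (htr : TransfersOmegaPremises m prev' prev)
    (hfeed : ∀ σ, OmDerAux prev' m false σ → prev σ) (hd : OmDerAux prev (m + 1) false Γ)
    (hp : Positive (m + 1) Γ) (hcl : ClosedSeq Γ) : OmDerAux prev' m false Γ := by
  suffices ∀ {c Γ}, OmDerAux prev (m + 1) c Γ → c = false → Positive (m + 1) Γ → ClosedSeq Γ →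
      OmDerAux prev' m false Γ from this hd rfl hp hcl
  intro c Γ hd hc hp hcl
  induction hd with
  | ax c Γ i => exact ax false Γ i
  | orR c Γ A B _ ih =>
    simp only [positive_insert, closedSeq_insert] at hp hcl ih
    exact orR false Γ A B (ih hc ⟨hp.1.or_left, hp.1.or_right, hp.2⟩ ⟨hcl.1.1, hcl.1.2, hcl.2⟩)
  | andR c Γ A B _ _ ihA ihB =>
    simp only [positive_insert, closedSeq_insert] at hp hcl ihA ihB
    exact andR false Γ A B (ihA hc ⟨hp.1.and_left, hp.2⟩ ⟨hcl.1.1, hcl.2⟩)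
      (ihB hc ⟨hp.1.and_right, hp.2⟩ ⟨hcl.1.2, hcl.2⟩)
  | boxR c Γ S A _ ih =>
    simp only [positive_insert, closedSeq_insert] at ih
    exact boxR false Γ S A (ih hc
      ⟨IsPositive.of_box (hp (box A) (by simp)),
        fun C hC => IsPositive.of_dia (hp (dia C) (by simp [hC]))⟩
      ⟨hcl (box A) (by simp), fun C hC => hcl (dia C) (by simp [hC])⟩)
  | clo c Γ A _ ih =>
    simp only [positive_insert, closedSeq_insert] at hp hcl ih
    exact clo false Γ A (ih hc ⟨hp.1.subst_mu, hp.2⟩ ⟨closedF_subst A trivial, hcl.2⟩)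
  | nuR c Γ A _ ih =>
    simp only [positive_insert, closedSeq_insert] at hp hcl ih
    exact nuR false Γ A fun i => ih i hc ⟨hp.1.iter i, hp.2⟩ ⟨closedF_iter A i, hcl.2⟩
  | cut => cases hc
  | omega c Γ A h h1 _ hA hlev _ ih =>
    rw [positive_insert, closedSeq_insert] at *
    have hhm : h ≤ m := by
      have := hp.1.lev_lt_of_compl_mu
      have := lev_prime_compl_mu A
      omega
    exact omega false Γ A h h1 hhm hA hlev fun Δ hΔc hΔp hΔ =>
      ih Δ hΔc hΔp (htr A h Δ hhm hlev hΔc hΔp hΔ) hc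
        ((hΔp.mono (by omega)).union hp.2) (hΔc.union hcl.2)
  | omegaT c Γ A h h1 hhk hA hlev _ _ ihT ih =>
    have := lev_prime_compl_mu A
    have hT := ihT hc (positive_insert.2 ⟨(isPositive_mu_prime A).mono (by omega), hp⟩)
      (closedSeq_insert.2 ⟨trivial, hcl⟩)
    by_cases hhm : h ≤ m
    · exact omegaT false Γ A h h1 hhm hA hlev hT fun Δ hΔc hΔp hΔ =>
        ih Δ hΔc hΔp (htr A h Δ hhm hlev hΔc hΔp hΔ) hc
          ((hΔp.mono (by omega)).union hp) (hΔc.union hcl)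
    · obtain rfl : h = m + 1 := by omega
      simpa using ih Γ hcl hp (hfeed _ hT) hc (hp.union hp) (hcl.union hcl)

end OmDerAux

def CutFreeBelow : ℕ → Sequent → Prop
  | 0 => fun _ => False
  | k + 1 => OmProv k false

theorem omProv_eq : ∀ k, OmProv k = OmDerAux (CutFreeBelow k) k
  | 0 => rfl
  | _ + 1 => rfl

theorem transfersOmegaPremises_zero {p q : Sequent → Prop} : TransfersOmegaPremises 0 p q :=
  fun E h _ h0 hlev => by have := lev_prime_compl_mu E; omega

theorem omProv_succ {k : ℕ} (htr : TransfersOmegaPremises k (OmProv k false) (CutFreeBelow k))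
    {c : Bool} {Γ : Sequent} (hd : OmProv k c Γ) : OmProv (k + 1) c Γ := by
  rw [omProv_eq] at hd
  exact hd.lift k.le_succ htr

theorem omProv_collapse {k : ℕ} (htr : TransfersOmegaPremises k (CutFreeBelow k) (OmProv k false))
    {Γ : Sequent} (hd : OmProv (k + 1) false Γ) (hp : Positive (k + 1) Γ) (hcl : ClosedSeq Γ) :
    OmProv k false Γ := by
  rw [omProv_eq] at hd ⊢
  exact hd.collapse htr (fun σ hσ => by rwa [omProv_eq]) hp hcl

theorem transfersOmegaPremises_omProv (k : ℕ) :
    TransfersOmegaPremises k (OmProv k false) (CutFreeBelow k) ∧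
      TransfersOmegaPremises k (CutFreeBelow k) (OmProv k false) := by
  induction k with
  | zero => exact ⟨transfersOmegaPremises_zero, transfersOmegaPremises_zero⟩
  | succ k ih =>
    refine ⟨fun E h Δ hhk hlev hΔc hΔp hd =>
      omProv_collapse ih.2 hd ?_ (closedSeq_insert.2 ⟨trivial, hΔc⟩),
      fun _ _ _ _ _ _ _ hd => omProv_succ ih.1 hd⟩
    have := lev_prime_compl_mu E
    exact positive_insert.2 ⟨(isPositive_mu_prime E).mono (by omega), hΔp.mono hhk⟩

def Replaced (A B C x : Form) : Prop :=
  x = C ∨ ∃ u, (u = B ∨ u = B.prime) ∧ C.IsPositive (A.lev + 1) ∧ x = replace (mu A.prime) u C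

def ReplacedIn (A B : Form) (σ τ : Sequent) : Prop := ∀ C ∈ σ, ∃ x ∈ τ, Replaced A B C x

namespace Replaced

variable {A B C D x : Form}

theorem refl : Replaced A B C C := Or.inl rfl

theorem of_atom {i : ℕ} (h : Replaced A B (atom i) x) : x = atom i := by
  rcases h with rfl | ⟨u, -, -, rfl⟩ <;> simp [replace]

theorem of_natom {i : ℕ} (h : Replaced A B (natom i) x) : x = natom i := by
  rcases h with rfl | ⟨u, -, -, rfl⟩ <;> simp [replace]

theorem of_or (h : Replaced A B (or C D) x) :
    ∃ v w, x = Form.or v w ∧ Replaced A B C v ∧ Replaced A B D w := by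
  rcases h with rfl | ⟨u, hu, hp, rfl⟩
  · exact ⟨C, D, rfl, refl, refl⟩
  · exact ⟨_, _, by simp [replace], .inr ⟨u, hu, hp.or_left, rfl⟩,
      .inr ⟨u, hu, hp.or_right, rfl⟩⟩

theorem of_and (h : Replaced A B (and C D) x) :
    ∃ v w, x = Form.and v w ∧ Replaced A B C v ∧ Replaced A B D w := by
  rcases h with rfl | ⟨u, hu, hp, rfl⟩
  · exact ⟨C, D, rfl, refl, refl⟩
  · exact ⟨_, _, by simp [replace], .inr ⟨u, hu, hp.and_left, rfl⟩,
      .inr ⟨u, hu, hp.and_right, rfl⟩⟩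

theorem of_box (h : Replaced A B (box C) x) : ∃ v, x = box v ∧ Replaced A B C v := by
  rcases h with rfl | ⟨u, hu, hp, rfl⟩
  · exact ⟨C, rfl, refl⟩
  · exact ⟨_, by simp [replace], .inr ⟨u, hu, hp.of_box, rfl⟩⟩

theorem of_dia (h : Replaced A B (dia C) x) : ∃ v, x = dia v ∧ Replaced A B C v := by
  rcases h with rfl | ⟨u, hu, hp, rfl⟩
  · exact ⟨C, rfl, refl⟩
  · exact ⟨_, by simp [replace], .inr ⟨u, hu, hp.of_dia, rfl⟩⟩

theorem of_nu (hBc : B.ClosedF) (h : Replaced A B (nu C) x) :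
    ∃ C₂, x = nu C₂ ∧ ∀ i, Replaced A B (iter C i) (iter C₂ i) := by
  rcases h with rfl | ⟨u, hu, hp, rfl⟩
  · exact ⟨C, rfl, fun _ => refl⟩
  · refine ⟨replace (mu A.prime) u C, by simp [replace], fun i => .inr ⟨u, hu, hp.iter i, ?_⟩⟩
    exact (replace_iter _ (ClosedF.of_eq_or_eq_prime hBc hu) C i).symm

theorem of_mu (hBc : B.ClosedF) (h : Replaced A B (mu C) x) :
    ((x = B ∨ x = B.prime) ∧ Replaced A B (subst C (mu C)) (subst A B).prime) ∨
      ∃ C₂, x = mu C₂ ∧ Replaced A B (subst C (mu C)) (subst C₂ (mu C₂)) := by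
  rcases h with rfl | ⟨u, hu, hp, rfl⟩
  · exact .inr ⟨C, rfl, refl⟩
  by_cases hC : C = A.prime
  · subst hC
    refine .inl ⟨by simpa [replace] using hu, .inr ⟨B.prime, .inr rfl, hp.subst_mu, ?_⟩⟩
    rw [replace_subst _ hBc.prime, replace_of_not_occursIn (not_occursIn_mu_self _), prime_subst]
    simp [replace]
  · refine .inr ⟨replace (mu A.prime) u C, by simp [replace, hC], .inr ⟨u, hu, hp.subst_mu, ?_⟩⟩
    rw [replace_subst _ (ClosedF.of_eq_or_eq_prime hBc hu)]
    simp [replace, hC]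

theorem of_compl_mu {E : Form} (h : Replaced A B (compl (mu E)).prime x) :
    x = (compl (mu E)).prime := by
  rcases h with rfl | ⟨u, -, hp, rfl⟩
  · rfl
  refine replace_of_not_occursIn fun hocc => ?_
  have := lev_le_of_occursIn hocc
  have := hp.lev_lt_of_compl_mu
  simp [lev] at *
  omega

end Replaced

namespace ReplacedIn

variable {A B : Form} {σ τ : Sequent}

theorem of_insert {C : Form} (h : ReplacedIn A B (insert C σ) τ) :
    (∃ x ∈ τ, Replaced A B C x) ∧ ReplacedIn A B σ τ :=
  Finset.forall_mem_insert _ _ _ |>.1 h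

theorem insert_replaced {C x : Form} (hC : Replaced A B C x) (h : ReplacedIn A B σ τ) :
    ReplacedIn A B (insert C σ) (insert x τ) := by
  intro D hD
  rcases Finset.mem_insert.1 hD with rfl | hD
  · exact ⟨x, Finset.mem_insert_self _ _, hC⟩
  · obtain ⟨y, hy, hDy⟩ := h D hD
    exact ⟨y, Finset.mem_insert_of_mem hy, hDy⟩

theorem union_left (Δ : Sequent) (h : ReplacedIn A B σ τ) : ReplacedIn A B (Δ ∪ σ) (Δ ∪ τ) := by
  intro C hC
  rcases Finset.mem_union.1 hC with hC | hC
  · exact ⟨C, Finset.mem_union_left _ hC, .refl⟩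
  · obtain ⟨x, hx, hCx⟩ := h C hC
    exact ⟨x, Finset.mem_union_right _ hx, hCx⟩

end ReplacedIn

theorem ReplacedIn.boxR_premise {A B : Form} {τ S Γ : Sequent} {C : Form}
    (h : ReplacedIn A B (Γ.image dia ∪ insert (box C) S) τ) :
    ∃ v Γ', box v ∈ τ ∧ Γ'.image dia ⊆ τ ∧ ReplacedIn A B (insert C Γ) (insert v Γ') := by
  obtain ⟨x, hx, hCx⟩ := h (box C) (by simp)
  obtain ⟨v, rfl, hv⟩ := hCx.of_box
  refine ⟨v, τ.preimage dia fun _ _ _ _ h => dia.inj h, hx,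
    Finset.image_subset_iff.2 fun _ h => Finset.mem_preimage.1 h,
    ReplacedIn.insert_replaced hv fun D hD => ?_⟩
  obtain ⟨y, hy, hDy⟩ := h (dia D) (by simp [hD])
  obtain ⟨w, rfl, hw⟩ := hDy.of_dia
  exact ⟨w, Finset.mem_preimage.2 hy, hw⟩

theorem OmProv.mono {k : ℕ} {c : Bool} {Γ Γ' : Sequent} (hd : OmProv k c Γ) (hs : Γ ⊆ Γ') :
    OmProv k c Γ' := by
  rw [omProv_eq] at hd ⊢
  exact hd.mono hs

theorem omProv_of_cut_subst {K : ℕ} {A B x : Form} {τ : Sequent}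
    (hA : A.IsL0) (hB : B.IsL0) (hBc : B.ClosedF) (hlevA : A.lev ≤ K + 1) (hlevB : B.lev ≤ K + 1)
    (h1 : OmProv (K + 1) true {(compl (subst A B)).prime, B})
    (h2 : OmProv (K + 1) true {(compl (subst A B)).prime, B.prime})
    (hxB : x = B ∨ x = B.prime) (hx : x ∈ τ)
    (hP : OmProv (K + 1) true (insert (subst A B).prime τ)) : OmProv (K + 1) true τ := by
  have hcompl : OmProv (K + 1) true (insert (compl (subst A B)).prime τ) := by
    refine OmProv.mono ?_ (Finset.insert_subset_insert _ (Finset.singleton_subset_iff.2 hx))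
    rcases hxB with rfl | rfl
    exacts [h1, h2]
  exact OmDerAux.cut τ (subst A B) (hA.subst hB) (closedF_subst A hBc)
    ((lev_subst_le A B).trans (max_le hlevA hlevB)) hP hcompl

theorem OmDerAux.omProv_of_replacedIn {K : ℕ} {A B : Form} {prev : Sequent → Prop}
    (hBc : B.ClosedF)
    (hcut : ∀ {x τ}, (x = B ∨ x = B.prime) → x ∈ τ →
      OmProv (K + 1) true (insert (subst A B).prime τ) → OmProv (K + 1) true τ)
    (htr : TransfersOmegaPremises K (OmProv K false) prev)
    {σ τ : Sequent} (hd : OmDerAux prev K false σ) (hστ : ReplacedIn A B σ τ) :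
    OmProv (K + 1) true τ := by
  suffices ∀ {c σ}, OmDerAux prev K c σ → c = false → ∀ {τ}, ReplacedIn A B σ τ →
      OmProv (K + 1) true τ from this hd rfl hστ
  intro c σ hd hc τ hστ
  induction hd generalizing τ with
  | ax c Γ i =>
    obtain ⟨⟨x, hx, hax⟩, hΓ⟩ := hστ.of_insert
    obtain ⟨⟨y, hy, hnx⟩, -⟩ := hΓ.of_insert
    rw [hax.of_atom] at hx
    rw [hnx.of_natom] at hy
    exact OmDerAux.ax_of_mem hx hy
  | orR c Γ C D _ ih =>
    obtain ⟨⟨x, hx, hCx⟩, hΓ⟩ := hστ.of_insert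
    obtain ⟨v, w, rfl, hv, hw⟩ := hCx.of_or
    exact OmDerAux.orR_of_mem hx (ih hc ((hΓ.insert_replaced hw).insert_replaced hv))
  | andR c Γ C D _ _ ihC ihD =>
    obtain ⟨⟨x, hx, hCx⟩, hΓ⟩ := hστ.of_insert
    obtain ⟨v, w, rfl, hv, hw⟩ := hCx.of_and
    exact OmDerAux.andR_of_mem hx (ihC hc (hΓ.insert_replaced hv)) (ihD hc (hΓ.insert_replaced hw))
  | boxR c Γ S C _ ih =>
    obtain ⟨v, Γ', hv, hΓ', hrep⟩ := hστ.boxR_premise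
    exact OmDerAux.boxR_of_mem hv hΓ' (ih hc hrep)
  | clo c Γ C _ ih =>
    obtain ⟨⟨x, hx, hCx⟩, hΓ⟩ := hστ.of_insert
    rcases hCx.of_mu hBc with ⟨hxB, hP⟩ | ⟨C₂, rfl, hP⟩
    · exact hcut hxB hx (ih hc (hΓ.insert_replaced hP))
    · exact OmDerAux.clo_of_mem hx (ih hc (hΓ.insert_replaced hP))
  | nuR c Γ C _ ih =>
    obtain ⟨⟨x, hx, hCx⟩, hΓ⟩ := hστ.of_insert
    obtain ⟨C₂, rfl, hi⟩ := hCx.of_nu hBc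
    exact OmDerAux.nuR_of_mem hx fun i => ih i hc (hΓ.insert_replaced (hi i))
  | cut => cases hc
  | omega c Γ E h h1 hhK hE hlev _ ih =>
    obtain ⟨⟨x, hx, hNx⟩, hΓ⟩ := hστ.of_insert
    rw [hNx.of_compl_mu] at hx
    exact OmDerAux.omega_of_mem h1 (by omega) hE hlev hx fun Δ hΔc hΔp hΔ =>
      ih Δ hΔc hΔp (htr E h Δ hhK hlev hΔc hΔp hΔ) hc (hΓ.union_left Δ)
  | omegaT c Γ E h h1 hhK hE hlev _ _ ihT ih =>
    exact OmDerAux.omegaT true τ E h h1 (by omega) hE hlev (ihT hc (hστ.insert_replaced .refl))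
      fun Δ hΔc hΔp hΔ => ih Δ hΔc hΔp (htr E h Δ hhK hlev hΔc hΔp hΔ) hc (hστ.union_left Δ)

theorem replacedIn_union_image {A B : Form} {Δ S₁ S₂ : Sequent}
    (hS₁ : Positive (A.lev + 1) S₁) (hS₂ : Positive (A.lev + 1) S₂) :
    ReplacedIn A B (Δ ∪ S₁ ∪ S₂)
      (Δ ∪ S₁.image (replace (mu A).prime B) ∪ S₂.image (replace (mu A).prime B.prime)) := by
  intro C hC
  simp only [Finset.mem_union] at hC
  rcases hC with (hC | hC) | hC
  · exact ⟨C, by simp [hC], .refl⟩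
  · exact ⟨_, Finset.mem_union_left _ (Finset.mem_union_right _ (Finset.mem_image_of_mem _ hC)),
      .inr ⟨B, .inl rfl, hS₁ C hC, rfl⟩⟩
  · exact ⟨_, Finset.mem_union_right _ (Finset.mem_image_of_mem _ hC),
      .inr ⟨B.prime, .inr rfl, hS₂ C hC, rfl⟩⟩

theorem stmt6_general (k : ℕ) (A B : Form)
    (hA : A.IsL0) (hlevA : Form.lev (Form.nu A) ≤ k)
    (hB : B.IsL0) (hBc : B.ClosedF) (hlevB : B.lev ≤ k)
    (Δ S₁ S₂ : Sequent)
    (hS₁p : Positive (Form.lev (Form.nu A)) S₁)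
    (hS₂p : Positive (Form.lev (Form.nu A)) S₂)
    (h1 : OmProv k true {Form.prime (Form.compl (Form.subst A B)), B})
    (h2 : OmProv k true {Form.prime (Form.compl (Form.subst A B)), B.prime})
    (hd : OmProv (k - 1) false (Δ ∪ S₁ ∪ S₂)) :
    OmProv k true
      (Δ ∪ S₁.image (Form.replace (Form.prime (Form.mu A)) B)
        ∪ S₂.image (Form.replace (Form.prime (Form.mu A)) B.prime)) := by
  obtain _ | K := k
  · simp [lev] at hlevA
  · simp only [lev, Nat.add_le_add_iff_right] at hlevA
    rw [Nat.add_sub_cancel, omProv_eq] at hd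
    exact hd.omProv_of_replacedIn hBc
      (omProv_of_cut_subst hA hB hBc (by omega) hlevB h1 h2)
      (transfersOmegaPremises_omProv K).1 (replacedIn_union_image hS₁p hS₂p)

/-- the substitution lemma for the induction rule.  With
`h = lev(νX.A) ≤ k`, `Δ, S₁, S₂` `h`-positive sequents, `B` an `L0` formula of level
`≤ k`, and `(¬A(B))ʹ, B` and `(¬A(B))ʹ, Bʹ` derivable in `M^Ω_k`: if `Δ, S₁, S₂` is
cut-free derivable in `M^Ω_{k-1}`, then `Δ, S₁[(μX.A)ʹ := B], S₂[(μX.A)ʹ := Bʹ]`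
is derivable in `M^Ω_k`. -/
theorem stmt6 (k : ℕ) (A B : Form)
    (hA : A.IsL0) (hlevA : Form.lev (Form.nu A) ≤ k)
    (hB : B.IsL0) (hBc : B.ClosedF) (hlevB : B.lev ≤ k)
    (Δ S₁ S₂ : Sequent)
    (hΔc : ClosedSeq Δ) (hS₁c : ClosedSeq S₁) (hS₂c : ClosedSeq S₂)
    (hΔp : Positive (Form.lev (Form.nu A)) Δ)
    (hS₁p : Positive (Form.lev (Form.nu A)) S₁)
    (hS₂p : Positive (Form.lev (Form.nu A)) S₂)
    (h1 : OmProv k true {Form.prime (Form.compl (Form.subst A B)), B})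
    (h2 : OmProv k true {Form.prime (Form.compl (Form.subst A B)), B.prime})
    (hd : OmProv (k - 1) false (Δ ∪ S₁ ∪ S₂)) :
    OmProv k true
      (Δ ∪ S₁.image (Form.replace (Form.prime (Form.mu A)) B)
        ∪ S₂.image (Form.replace (Form.prime (Form.mu A)) B.prime)) :=
  stmt6_general k A B hA hlevA hB hBc hlevB Δ S₁ S₂ hS₁p hS₂p h1 h2 hd

end OneVarMu
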